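/- arXiv:2602.06754 — 3 statements merged into one kernel-verified Lean document; each statement's English description precedes it below -/
import Mathlib

section
/- Let Σ be a nonempty finite set, let p ∈ Δ(Σ) have full support, and let g : Σ → ℝ be non-constant. Let M(g) = argmax_{u∈Σ} g_u, ε_max(g) = −log(Σ_{u∈M(g)} p_u), and define q_∞ ∈ Δ(Σ) by q_∞(u) = p_u·1{u ∈ M(g)} / Σ_{v∈M(g)} p_v. If ε ≥ ε_max(g), then q_∞ maximizes the linear functional q ↦ Σ_{u∈Σ} g_u q_u over {q ∈ Δ(Σ) : KL(q ‖ p) ≤ ε}. -/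
open Finset

/-- The probability simplex on a finite type `V`. -/
def simplex (V : Type*) [Fintype V] : Set (V → ℝ) :=
  {q | (∀ u, 0 ≤ q u) ∧ ∑ u, q u = 1}

/-- KL divergence `KL(q ‖ p) = ∑ u, q u * log (q u / p u)`
(the convention `0 · log 0 = 0` holds automatically). -/
noncomputable def KL {V : Type*} [Fintype V] (q p : V → ℝ) : ℝ :=
  ∑ u, q u * Real.log (q u / p u)

/-- The renormalized restriction of `p` to the argmax set of `g`:
`q_∞(u) = p_u · 1{u ∈ M(g)} / ∑_{v ∈ M(g)} p_v`. -/
noncomputable def qInf {V : Type*} [Fintype V] (p g : V → ℝ) : V → ℝ :=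
  fun u => (if ∀ v, g v ≤ g u then p u else 0) /
    ∑ v ∈ Finset.univ.filter (fun w => ∀ x, g x ≤ g w), p v

/-!
`q_∞` is `p` conditioned on the argmax set `M(g)`. Conditioning on an event of probability `P`
costs exactly `-log P` in KL divergence, so `KL(q_∞ ‖ p) = ε_max(g) ≤ ε` and `q_∞` is feasible.
Being supported on `M(g)`, it gives `g` its maximal value `max g`, which bounds the
`g`-expectation of every distribution, feasible or not.
-/

lemma sum_mul_le_of_le {V : Type*} [Fintype V] {q g : V → ℝ} {c : ℝ} (hq : q ∈ simplex V)
    (hg : ∀ u, g u ≤ c) : ∑ u, g u * q u ≤ c :=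
  calc ∑ u, g u * q u ≤ ∑ u, c * q u :=
        Finset.sum_le_sum fun u _ => mul_le_mul_of_nonneg_right (hg u) (hq.1 u)
    _ = c := by rw [← Finset.mul_sum, hq.2, mul_one]

noncomputable def argmaxSet {V : Type*} [Fintype V] (g : V → ℝ) : Finset V :=
  Finset.univ.filter fun w => ∀ x, g x ≤ g w

section

variable {V : Type*} [Fintype V] [DecidableEq V]

noncomputable def normalizeOn (p : V → ℝ) (s : Finset V) (u : V) : ℝ :=
  (if u ∈ s then p u else 0) / ∑ v ∈ s, p v

lemma sum_normalizeOn {p : V → ℝ} {s : Finset V} (hs : ∑ v ∈ s, p v ≠ 0) :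
    ∑ u, normalizeOn p s u = 1 := by
  simp only [normalizeOn, ← Finset.sum_div, Finset.sum_ite_mem, Finset.univ_inter]
  exact div_self hs

lemma normalizeOn_mem_simplex {p : V → ℝ} {s : Finset V} (hp : ∀ u ∈ s, 0 ≤ p u)
    (hs : 0 < ∑ v ∈ s, p v) : normalizeOn p s ∈ simplex V := by
  refine ⟨fun u => div_nonneg ?_ hs.le, sum_normalizeOn hs.ne'⟩
  split_ifs with hu
  exacts [hp u hu, le_rfl]

lemma KL_normalizeOn (p : V → ℝ) (s : Finset V) :
    KL (normalizeOn p s) p = -Real.log (∑ v ∈ s, p v) := by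
  set S := ∑ v ∈ s, p v
  have hterm : ∀ u, normalizeOn p s u * Real.log (normalizeOn p s u / p u)
      = normalizeOn p s u * -Real.log S := by
    intro u
    by_cases hu : u ∈ s
    · by_cases hpu : p u = 0
      · simp [normalizeOn, hu, hpu]
      · simp only [normalizeOn, hu, if_true, div_div_cancel_left' hpu, Real.log_inv, S]
    · simp [normalizeOn, hu]
  by_cases hS : S = 0
  · simp [KL, normalizeOn, S, hS]
  · rw [KL, Finset.sum_congr rfl fun u _ => hterm u, ← Finset.sum_mul, sum_normalizeOn hS,
      one_mul]

lemma sum_mul_normalizeOn_of_eqOn {p g : V → ℝ} {s : Finset V} {c : ℝ}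
    (hg : ∀ u ∈ s, g u = c) (hs : ∑ v ∈ s, p v ≠ 0) :
    ∑ u, g u * normalizeOn p s u = c := by
  have hterm : ∀ u, g u * normalizeOn p s u = c * normalizeOn p s u := by
    intro u
    by_cases hu : u ∈ s
    · rw [hg u hu]
    · simp [normalizeOn, hu]
  rw [Finset.sum_congr rfl fun u _ => hterm u, ← Finset.mul_sum, sum_normalizeOn hs, mul_one]

lemma qInf_eq_normalizeOn (p g : V → ℝ) : qInf p g = normalizeOn p (argmaxSet g) := by
  funext u
  simp [qInf, normalizeOn, argmaxSet]

end

theorem stmt_1_general {V : Type*} [Fintype V] [Nonempty V]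
    (p : V → ℝ) (hppos : ∀ u, 0 < p u)
    (g : V → ℝ)
    (ε : ℝ)
    (hε : - Real.log (∑ u ∈ Finset.univ.filter (fun u => ∀ v, g v ≤ g u), p u) ≤ ε) :
    qInf p g ∈ simplex V ∧ KL (qInf p g) p ≤ ε ∧
      ∀ q ∈ simplex V, KL q p ≤ ε → ∑ u, g u * q u ≤ ∑ u, g u * qInf p g u := by
  classical
  obtain ⟨u₀, hu₀⟩ := Finite.exists_max g
  have hu₀M : u₀ ∈ argmaxSet g := by simp [argmaxSet, hu₀]
  have hS : 0 < ∑ v ∈ argmaxSet g, p v := Finset.sum_pos (fun u _ => hppos u) ⟨u₀, hu₀M⟩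
  have hmax : ∀ u ∈ argmaxSet g, g u = g u₀ := fun u hu =>
    le_antisymm (hu₀ u) ((Finset.mem_filter.1 hu).2 u₀)
  rw [qInf_eq_normalizeOn]
  refine ⟨normalizeOn_mem_simplex (fun u _ => (hppos u).le) hS, ?_, fun q hq _ => ?_⟩
  · exact (KL_normalizeOn p _).trans_le hε
  · rw [sum_mul_normalizeOn_of_eqOn hmax hS.ne']
    exact sum_mul_le_of_le hq hu₀

theorem stmt_1 {V : Type*} [Fintype V] [Nonempty V]
    (p : V → ℝ) (hp : p ∈ simplex V) (hppos : ∀ u, 0 < p u)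
    (g : V → ℝ) (hg : ∃ u v, g u ≠ g v)
    (ε : ℝ)
    (hε : - Real.log (∑ u ∈ Finset.univ.filter (fun u => ∀ v, g v ≤ g u), p u) ≤ ε) :
    qInf p g ∈ simplex V ∧ KL (qInf p g) p ≤ ε ∧
      ∀ q ∈ simplex V, KL q p ≤ ε → ∑ u, g u * q u ≤ ∑ u, g u * qInf p g u :=
  stmt_1_general p hppos g ε hε
end

section
/- Let Σ be a nonempty finite set, let p ∈ Δ(Σ) have full support, and let g : Σ → ℝ. For δ ≥ 0 define q_δ(u) = p_u e^{δ g_u} / Z(δ) with Z(δ) = Σ_{v∈Σ} p_v e^{δ g_v}, and let M(g) = argmax_{u∈Σ} g_u. Then as δ → ∞, q_δ converges to the distribution q_∞(u) = p_u·1{u ∈ M(g)} / Σ_{v∈M(g)} p_v, and lim_{δ→∞} KL(q_δ ‖ p) = −log(Σ_{u∈M(g)} p_u). -/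
open Finset

/-- The exponentially tilted distribution `q_δ(u) = p_u e^{δ g_u} / Z(δ)`. -/
noncomputable def qExp {V : Type*} [Fintype V] (p g : V → ℝ) (δ : ℝ) : V → ℝ :=
  fun u => p u * Real.exp (δ * g u) / ∑ v, p v * Real.exp (δ * g v)

open Filter Topology Real

/-!
Subtracting `max g` from `g` does not change `q_δ`, and afterwards each weight `e^{δ (g_u - max g)}`
tends to the indicator of the argmax set `M`, so `q_δ → q_∞`. Since `x ↦ x log x` is continuous,
so is `KL(· ‖ p)`, and the limit of the divergences is `KL(q_∞ ‖ p) = -log p(M)`.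
-/

lemma continuous_mul_log_div (c : ℝ) : Continuous fun x : ℝ => x * log (x / c) := by
  rcases eq_or_ne c 0 with rfl | hc
  · simpa using continuous_const
  have h : (fun x : ℝ => x * log (x / c)) = fun x => x * log x - x * log c := by
    funext x
    rcases eq_or_ne x 0 with rfl | hx
    · simp
    · rw [log_div hx hc, mul_sub]
  rw [h]
  exact continuous_mul_log.sub (continuous_id.mul continuous_const)

section Tilt

variable {V : Type*} [Fintype V] (p g : V → ℝ)

lemma continuous_KL : Continuous fun q : V → ℝ => KL q p :=
  continuous_finsetSum _ fun u _ => (continuous_mul_log_div (p u)).comp (continuous_apply u)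

lemma KL_qInf : KL (qInf p g) p = -log (∑ u ∈ univ.filter (fun u => ∀ v, g v ≤ g u), p u) := by
  simp only [KL, qInf]
  generalize hc : ∑ v ∈ univ.filter (fun w => ∀ x, g x ≤ g w), p v = c
  have hterm : ∀ u, (if ∀ v, g v ≤ g u then p u else 0) / c *
      log ((if ∀ v, g v ≤ g u then p u else 0) / c / p u) =
      -((if ∀ v, g v ≤ g u then p u else 0) / c * log c) := by
    intro u
    split_ifs
    · rcases eq_or_ne (p u) 0 with hpu | hpu
      · simp [hpu]
      · rw [div_div_cancel_left' hpu, log_inv, mul_neg]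
    · simp
  have hsum : ∑ u, (if ∀ v, g v ≤ g u then p u else 0) / c = c / c := by
    rw [← sum_div, ← sum_filter, hc]
  rcases eq_or_ne c 0 with rfl | hc0
  · simp
  · simp [hterm, ← sum_mul, hsum, hc0]

lemma qExp_apply_eq_shift (m δ : ℝ) (u : V) :
    qExp p g δ u = p u * exp (δ * (g u - m)) / ∑ v, p v * exp (δ * (g v - m)) := by
  have hshift : ∀ v, p v * exp (δ * g v) = p v * exp (δ * (g v - m)) * exp (δ * m) := by
    intro v
    rw [mul_assoc, ← exp_add]
    ring_nf
  simp only [qExp, hshift, ← sum_mul]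
  exact mul_div_mul_right _ _ (exp_ne_zero _)

lemma tendsto_exp_mul_sub_of_isMax {u₀ : V} (hu₀ : ∀ v, g v ≤ g u₀) (u : V) :
    Tendsto (fun δ => exp (δ * (g u - g u₀))) atTop
      (𝓝 (if ∀ v, g v ≤ g u then 1 else 0)) := by
  by_cases hu : ∀ v, g v ≤ g u
  · rw [if_pos hu, le_antisymm (hu₀ u) (hu u₀), sub_self]
    simp
  · obtain ⟨v, hv⟩ := not_forall.1 hu
    have hneg : g u - g u₀ < 0 := by linarith [hu₀ v, not_le.1 hv]
    rw [if_neg hu]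
    exact tendsto_exp_atBot.comp (tendsto_id.atTop_mul_const_of_neg hneg)

theorem tendsto_qExp_qInf [Nonempty V] (hp : ∀ u, 0 < p u) :
    Tendsto (qExp p g) atTop (𝓝 (qInf p g)) := by
  obtain ⟨u₀, hu₀⟩ := Finite.exists_max g
  have hnum : ∀ u, Tendsto (fun δ => p u * exp (δ * (g u - g u₀))) atTop
      (𝓝 (if ∀ v, g v ≤ g u then p u else 0)) := fun u => by
    simpa only [mul_ite, mul_one, mul_zero] using
      (tendsto_exp_mul_sub_of_isMax g hu₀ u).const_mul (p u)
  have hden : Tendsto (fun δ => ∑ v, p v * exp (δ * (g v - g u₀))) atTop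
      (𝓝 (∑ v ∈ univ.filter (fun w => ∀ x, g x ≤ g w), p v)) := by
    rw [sum_filter]
    exact tendsto_finsetSum _ fun v _ => hnum v
  have hc : ∑ v ∈ univ.filter (fun w => ∀ x, g x ≤ g w), p v ≠ 0 :=
    (sum_pos (fun v _ => hp v) ⟨u₀, by simpa using hu₀⟩).ne'
  rw [tendsto_pi_nhds]
  intro u
  simp only [qExp_apply_eq_shift p g (g u₀)]
  exact (hnum u).div hden hc

end Tilt

theorem stmt_3_general {V : Type*} [Fintype V] [Nonempty V]
    (p : V → ℝ) (hppos : ∀ u, 0 < p u)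
    (g : V → ℝ) :
    Filter.Tendsto (fun δ => qExp p g δ) Filter.atTop (nhds (qInf p g)) ∧
    Filter.Tendsto (fun δ => KL (qExp p g δ) p) Filter.atTop
      (nhds (- Real.log (∑ u ∈ Finset.univ.filter (fun u => ∀ v, g v ≤ g u), p u))) := by
  have hq := tendsto_qExp_qInf p g hppos
  refine ⟨hq, ?_⟩
  rw [← KL_qInf p g]
  exact ((continuous_KL p).tendsto _).comp hq

theorem stmt_3 {V : Type*} [Fintype V] [Nonempty V]
    (p : V → ℝ) (hp : p ∈ simplex V) (hppos : ∀ u, 0 < p u)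
    (g : V → ℝ) :
    Filter.Tendsto (fun δ => qExp p g δ) Filter.atTop (nhds (qInf p g)) ∧
    Filter.Tendsto (fun δ => KL (qExp p g δ) p) Filter.atTop
      (nhds (- Real.log (∑ u ∈ Finset.univ.filter (fun u => ∀ v, g v ≤ g u), p u))) :=
  stmt_3_general p hppos g
end

section
/- Let Σ be a nonempty finite set, let p ∈ Δ(Σ) have full support, and let ε ≥ 0. Consider maximizing the Shannon entropy H(r) = −Σ_{u∈Σ} r_u log r_u over {r ∈ Δ(Σ) : KL(r ‖ p) ≤ ε}. If ε ≥ KL(Unif ‖ p), where Unif is the uniform distribution on Σ, then Unif is a maximizer. If 0 ≤ ε ≤ KL(Unif ‖ p), then there exists α ∈ [0,1] such that the distribution r*(α) defined by r*(α)_u = p_u^α / Σ_{v∈Σ} p_v^α satisfies KL(r*(α) ‖ p) = ε and r*(α) is a maximizer. -/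
open Finset

/-- Shannon entropy `H(r) = −∑ u, r u * log (r u)`. -/
noncomputable def shannonEntropy {V : Type*} [Fintype V] (r : V → ℝ) : ℝ :=
  - ∑ u, r u * Real.log (r u)

/-- The uniform distribution on `V`. -/
noncomputable def unif (V : Type*) [Fintype V] : V → ℝ :=
  fun _ => 1 / (Fintype.card V : ℝ)

/-- The tilted family `r*(α)_u = p_u^α / ∑ v, p_v^α`. -/
noncomputable def rStar {V : Type*} [Fintype V] (p : V → ℝ) (α : ℝ) : V → ℝ :=
  fun u => p u ^ α / ∑ v, p v ^ α

/-!
Let `Z α = ∑ v, p v ^ α`. Since `log (r*(α))_u = α log p_u - log Z α`, the divergence from the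
tilted distribution decomposes as
`KL(r ‖ r*(α)) = α KL(r ‖ p) - (1 - α) H(r) + log Z α`.
Comparing this identity for `r` and for `r*(α)` itself, Gibbs' inequality `KL(r ‖ r*(α)) ≥ 0` gives
`(1 - α) H(r) ≤ (1 - α) H(r*(α)) + α (KL(r ‖ p) - KL(r*(α) ‖ p))`.
At `α = 0` (where `r*(0)` is uniform) this is the maximality of the uniform distribution. Otherwise
`α ↦ KL(r*(α) ‖ p)` moves continuously from `KL(Unif ‖ p)` at `α = 0` to `0` at `α = 1`, so
the intermediate value theorem yields an `α` saturating the constraint; for `α < 1` the inequality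
concludes, and `α = 1` forces `ε = 0`, where `p` is the only feasible point.
-/

open Real InformationTheory

section KL

variable {V : Type*} [Fintype V]

theorem KL_eq_sum_mul_klFun {q p : V → ℝ} (hp : ∀ u, p u ≠ 0) (hsum : ∑ u, q u = ∑ u, p u) :
    KL q p = ∑ u, p u * klFun (q u / p u) := by
  have hterm : ∀ u, p u * klFun (q u / p u) = q u * log (q u / p u) + (p u - q u) := fun u => by
    rw [klFun_apply]
    field_simp [hp u]
    ring
  simp only [hterm, sum_add_distrib, sum_sub_distrib, hsum, sub_self, add_zero, KL]

theorem KL_nonneg {q p : V → ℝ} (hq : ∀ u, 0 ≤ q u) (hp : ∀ u, 0 < p u)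
    (hsum : ∑ u, q u = ∑ u, p u) : 0 ≤ KL q p := by
  rw [KL_eq_sum_mul_klFun (fun u => (hp u).ne') hsum]
  exact sum_nonneg fun u _ => mul_nonneg (hp u).le (klFun_nonneg (div_nonneg (hq u) (hp u).le))

theorem eq_of_KL_nonpos {q p : V → ℝ} (hq : ∀ u, 0 ≤ q u) (hp : ∀ u, 0 < p u)
    (hsum : ∑ u, q u = ∑ u, p u) (hKL : KL q p ≤ 0) : q = p := by
  have hnonneg : ∀ u ∈ univ, 0 ≤ p u * klFun (q u / p u) := fun u _ =>
    mul_nonneg (hp u).le (klFun_nonneg (div_nonneg (hq u) (hp u).le))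
  have hzero : ∑ u, p u * klFun (q u / p u) = 0 := by
    rw [← KL_eq_sum_mul_klFun (fun u => (hp u).ne') hsum]
    exact le_antisymm hKL (KL_nonneg hq hp hsum)
  funext u
  have hu := (sum_eq_zero_iff_of_nonneg hnonneg).mp hzero u (mem_univ u)
  rw [mul_eq_zero, klFun_eq_zero_iff (div_nonneg (hq u) (hp u).le), div_eq_one_iff_eq (hp u).ne']
    at hu
  exact hu.resolve_left (hp u).ne'

theorem KL_self (p : V → ℝ) : KL p p = 0 :=
  sum_eq_zero fun u _ => by simp

theorem KL_eq_neg_shannonEntropy_sub (r : V → ℝ) {p : V → ℝ} (hp : ∀ u, p u ≠ 0) :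
    KL r p = -shannonEntropy r - ∑ u, r u * log (p u) := by
  rw [shannonEntropy, neg_neg, ← sum_sub_distrib]
  refine sum_congr rfl fun u _ => ?_
  rcases eq_or_ne (r u) 0 with hr | hr
  · simp [hr]
  · rw [log_div hr (hp u)]
    ring

end KL

section rStar

variable {V : Type*} [Fintype V] [Nonempty V] {p : V → ℝ}

theorem sum_rpow_pos (hp : ∀ u, 0 < p u) (α : ℝ) : 0 < ∑ v, p v ^ α :=
  sum_pos (fun v _ => rpow_pos_of_pos (hp v) α) univ_nonempty

theorem rStar_pos (hp : ∀ u, 0 < p u) (α : ℝ) (u : V) : 0 < rStar p α u :=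
  div_pos (rpow_pos_of_pos (hp u) α) (sum_rpow_pos hp α)

theorem sum_rStar (hp : ∀ u, 0 < p u) (α : ℝ) : ∑ u, rStar p α u = 1 := by
  simp only [rStar]
  rw [← sum_div, div_self (sum_rpow_pos hp α).ne']

theorem rStar_mem_simplex (hp : ∀ u, 0 < p u) (α : ℝ) : rStar p α ∈ simplex V :=
  ⟨fun u => (rStar_pos hp α u).le, sum_rStar hp α⟩

omit [Nonempty V] in
theorem rStar_zero (p : V → ℝ) : rStar p 0 = unif V := by
  funext u
  simp [rStar, unif]

omit [Nonempty V] in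
theorem rStar_one (hp : ∑ u, p u = 1) : rStar p 1 = p := by
  funext u
  simp [rStar, hp]

theorem log_rStar (hp : ∀ u, 0 < p u) (α : ℝ) (u : V) :
    log (rStar p α u) = α * log (p u) - log (∑ v, p v ^ α) := by
  rw [rStar, log_div (rpow_pos_of_pos (hp u) α).ne' (sum_rpow_pos hp α).ne', log_rpow (hp u)]

theorem continuous_KL_rStar (hp : ∀ u, 0 < p u) : Continuous fun α => KL (rStar p α) p := by
  have hrStar : ∀ u, Continuous fun α => rStar p α u := fun u =>
    ((continuous_const_rpow (hp u).ne').div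
      (continuous_finsetSum _ fun v _ => continuous_const_rpow (hp v).ne'))
      fun α => (sum_rpow_pos hp α).ne'
  exact continuous_finsetSum _ fun u _ => (hrStar u).mul
    (((hrStar u).div_const _).log fun α => (div_pos (rStar_pos hp α u) (hp u)).ne')

theorem exists_KL_rStar_eq (hp : ∀ u, 0 < p u) (hp1 : ∑ u, p u = 1) {ε : ℝ} (hε : 0 ≤ ε)
    (hεle : ε ≤ KL (unif V) p) : ∃ α ∈ Set.Icc (0 : ℝ) 1, KL (rStar p α) p = ε := by
  have hmem : ε ∈ Set.Icc (KL (rStar p 1) p) (KL (rStar p 0) p) := by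
    rw [rStar_one hp1, KL_self, rStar_zero]
    exact ⟨hε, hεle⟩
  exact intermediate_value_Icc' zero_le_one (continuous_KL_rStar hp).continuousOn hmem

theorem KL_rStar_eq (hp : ∀ u, 0 < p u) (α : ℝ) {r : V → ℝ} (hr : ∑ u, r u = 1) :
    KL r (rStar p α) = α * KL r p - (1 - α) * shannonEntropy r + log (∑ v, p v ^ α) := by
  have hcross : ∑ u, r u * log (rStar p α u)
      = α * ∑ u, r u * log (p u) - log (∑ v, p v ^ α) := by
    simp only [log_rStar hp, mul_sub, sum_sub_distrib, ← sum_mul, hr, one_mul, mul_left_comm _ α,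
      ← mul_sum]
  rw [KL_eq_neg_shannonEntropy_sub r fun u => (rStar_pos hp α u).ne', hcross,
    KL_eq_neg_shannonEntropy_sub r fun u => (hp u).ne']
  ring

theorem one_sub_mul_shannonEntropy_le (hp : ∀ u, 0 < p u) (α : ℝ) {r : V → ℝ}
    (hr : r ∈ simplex V) :
    (1 - α) * shannonEntropy r ≤
      (1 - α) * shannonEntropy (rStar p α) + α * (KL r p - KL (rStar p α) p) := by
  have hgibbs : 0 ≤ KL r (rStar p α) :=
    KL_nonneg hr.1 (rStar_pos hp α) (by rw [hr.2, sum_rStar hp])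
  have hself := KL_rStar_eq hp α (sum_rStar hp α)
  rw [KL_rStar_eq hp α hr.2] at hgibbs
  rw [KL_self] at hself
  linarith

end rStar

theorem stmt_8 {V : Type*} [Fintype V] [Nonempty V]
    (p : V → ℝ) (hp : p ∈ simplex V) (hppos : ∀ u, 0 < p u)
    (ε : ℝ) (hε : 0 ≤ ε) :
    -- if `ε ≥ KL(Unif ‖ p)`, the uniform distribution is a maximizer
    (KL (unif V) p ≤ ε →
      unif V ∈ simplex V ∧
      ∀ r ∈ simplex V, KL r p ≤ ε → shannonEntropy r ≤ shannonEntropy (unif V)) ∧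
    -- if `0 ≤ ε ≤ KL(Unif ‖ p)`, some `r*(α)` with `α ∈ [0,1]` saturates the
    -- constraint and is a maximizer
    (ε ≤ KL (unif V) p →
      ∃ α ∈ Set.Icc (0 : ℝ) 1,
        KL (rStar p α) p = ε ∧
        rStar p α ∈ simplex V ∧
        ∀ r ∈ simplex V, KL r p ≤ ε → shannonEntropy r ≤ shannonEntropy (rStar p α)) := by
  refine ⟨fun _ => ⟨rStar_zero p ▸ rStar_mem_simplex hppos 0, fun r hr _ => ?_⟩, fun hεle => ?_⟩
  · simpa [rStar_zero] using one_sub_mul_shannonEntropy_le hppos 0 hr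
  obtain ⟨α, ⟨hα0, hα1⟩, hKL⟩ := exists_KL_rStar_eq hppos hp.2 hε hεle
  refine ⟨α, ⟨hα0, hα1⟩, hKL, rStar_mem_simplex hppos α, fun r hr hr_le => ?_⟩
  rcases hα1.lt_or_eq with hα1 | rfl
  · have h := one_sub_mul_shannonEntropy_le hppos α hr
    have hdiff : α * (KL r p - KL (rStar p α) p) ≤ 0 :=
      mul_nonpos_of_nonneg_of_nonpos hα0 (by linarith)
    exact le_of_mul_le_mul_left (by linarith) (sub_pos.mpr hα1)
  · rw [rStar_one hp.2, KL_self] at hKL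
    rw [eq_of_KL_nonpos hr.1 hppos (by rw [hr.2, hp.2]) (hKL ▸ hr_le), rStar_one hp.2]
end
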